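/- In the Incremental Stable Roommates construction from an ℓ-partite r-regular graph defined in the context, the matching M1 is stable with respect to the preference profile P1. -/

import Mathlib

/-- A preference profile: each agent has a finite set of acceptable agents and a
rank function encoding its preference list (lower rank = more preferred). -/
structure PrefProfile (A : Type*) where
  acc : A → Finset A
  rank : A → A → ℕ

namespace PrefProfile

variable {A : Type*} (P : PrefProfile A)

/-- Agent `a` strictly prefers `b` to `c`. -/
def Prefers (a b c : A) : Prop := P.rank a b < P.rank a c

/-- A lawful SR(-T) profile: no agent accepts itself and acceptability is symmetric. -/
def Lawful : Prop := (∀ a, a ∉ P.acc a) ∧ (∀ a b : A, b ∈ P.acc a → a ∈ P.acc b)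

/-- Strict preferences: no ties among acceptable agents. -/
def Strict : Prop := ∀ a : A, ∀ b ∈ P.acc a, ∀ c ∈ P.acc a, P.rank a b = P.rank a c → b = c

end PrefProfile

/-- A finite set of unordered pairs of agents is a matching if its pairs are
non-diagonal and pairwise disjoint. -/
def IsMatching {A : Type*} (M : Finset (Sym2 A)) : Prop :=
  (∀ p ∈ M, ¬ p.IsDiag) ∧ ∀ a b c : A, s(a, b) ∈ M → s(a, c) ∈ M → b = c

/-- `a` is matched in `M`. -/
def Matched {A : Type*} (M : Finset (Sym2 A)) (a : A) : Prop := ∃ b, s(a, b) ∈ M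

/-- A matching is perfect if it matches all agents. -/
def IsPerfect {A : Type*} (M : Finset (Sym2 A)) : Prop := ∀ a, Matched M a

/-- All pairs of `M` consist of mutually acceptable agents w.r.t. `P`. -/
def Acceptable {A : Type*} (P : PrefProfile A) (M : Finset (Sym2 A)) : Prop :=
  ∀ a b : A, s(a, b) ∈ M → b ∈ P.acc a

/-- The pair `{a, b}` blocks `M` w.r.t. `P`: `a` and `b` accept each other, and each
of them is either unmatched or strictly prefers the other to its partner. -/
def Blocks {A : Type*} (P : PrefProfile A) (M : Finset (Sym2 A)) (a b : A) : Prop :=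
  b ∈ P.acc a ∧ a ∈ P.acc b ∧
    (∀ c, s(a, c) ∈ M → P.Prefers a b c) ∧ (∀ c, s(b, c) ∈ M → P.Prefers b a c)

/-- `M` is a (weakly) stable matching for `P`. -/
def IsStable {A : Type*} (P : PrefProfile A) (M : Finset (Sym2 A)) : Prop :=
  IsMatching M ∧ Acceptable P M ∧ ∀ a b : A, ¬ Blocks P M a b

/-- The agents of the constructed ISR instance: for every color `c ∈ [ℓ]` the agents
`s^c, s̄^c, t^c, t̄^c, u^c, ū^c`; for every color `c` and vertex index `i ∈ [ν]` the
agents `a^c_{i,j}` (`V c i j`) and `ā^c_{i,j}` (`Vb c i j`) for `j ∈ {1,2,3,4}`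
(represented by `Fin 4`, `j = 0,1,2,3` standing for `1,2,3,4`); and for every edge
`e` the agents `a_{e,j}` (`Ed e j`). -/
inductive Ag (ℓ ν : ℕ) (E : Type) : Type
  | S : Fin ℓ → Ag ℓ ν E
  | Sb : Fin ℓ → Ag ℓ ν E
  | T : Fin ℓ → Ag ℓ ν E
  | Tb : Fin ℓ → Ag ℓ ν E
  | U : Fin ℓ → Ag ℓ ν E
  | Ub : Fin ℓ → Ag ℓ ν E
  | V : Fin ℓ → Fin ν → Fin 4 → Ag ℓ ν E
  | Vb : Fin ℓ → Fin ν → Fin 4 → Ag ℓ ν E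
  | Ed : E → Fin 4 → Ag ℓ ν E
  deriving DecidableEq

/-- The profile whose preference lists are the given lists (most preferred first);
an agent accepts exactly the agents on its list. -/
def profOfList {α : Type*} [DecidableEq α] (pl : α → List α) : PrefProfile α where
  acc a := (pl a).toFinset
  rank a b := (pl a).idxOf b

variable {ℓ ν : ℕ} {E : Type} [DecidableEq E] [Fintype E]

/-- Edge `e` (with endpoints `(c1 e, i1 e)` and `(c2 e, i2 e)`) is incident to the
vertex `v^c_i`. -/
def Incident (c1 c2 : E → Fin ℓ) (i1 i2 : E → Fin ν) (e : E) (c : Fin ℓ) (i : Fin ν) :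
    Prop :=
  (c1 e = c ∧ i1 e = i) ∨ (c2 e = c ∧ i2 e = i)

open Ag in
/-- The preference lists of the construction; `swap = false` gives `P1` and
`swap = true` gives `P2` (they differ only in the lists of `t^c` and `t̄^c`).
`enc c i` is the arbitrary fixed strict order `[A_{δ(v^c_i),1}]` of the edges
incident to `v^c_i`. -/
def plist911 (swap : Bool) (c1 c2 : E → Fin ℓ) (i1 i2 : E → Fin ν)
    (enc : Fin ℓ → Fin ν → List E) : Ag ℓ ν E → List (Ag ℓ ν E)
  | S c => T c :: (List.finRange ν).flatMap
      (fun i => V c i 0 :: Vb c i 0 :: (enc c i).map (fun e => Ed e 0))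
  | Sb c => Tb c :: (List.finRange ν).reverse.flatMap
      (fun i => V c i 3 :: Vb c i 3 :: (enc c i).map (fun e => Ed e 0))
  | T c => if swap then [U c, S c] else [S c, U c]
  | Tb c => if swap then [Ub c, Sb c] else [Sb c, Ub c]
  | U c => [T c]
  | Ub c => [Tb c]
  | V c i j =>
      if j = 0 then [V c i 1, S c, V c i 3]
      else if j = 1 then [V c i 2, V c i 0]
      else if j = 2 then [V c i 3, V c i 1]
      else [V c i 0, Sb c, V c i 2]
  | Vb c i j =>
      if j = 0 then [Vb c i 1, S c, Vb c i 3]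
      else if j = 1 then [Vb c i 2, Vb c i 0]
      else if j = 2 then [Vb c i 3, Vb c i 1]
      else [Vb c i 0, Sb c, Vb c i 2]
  | Ed e j =>
      if j = 0 then [Ed e 1, S (c1 e), Sb (c1 e), S (c2 e), Sb (c2 e), Ed e 3]
      else if j = 1 then [Ed e 2, Ed e 0]
      else if j = 2 then [Ed e 3, Ed e 1]
      else [Ed e 0, Ed e 2]

open Ag in
/-- The initial matching `M1`. -/
def M1g : Finset (Sym2 (Ag ℓ ν E)) :=
  (Finset.univ.image fun c : Fin ℓ => s(S c, T c)) ∪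
  (Finset.univ.image fun c : Fin ℓ => s(Sb c, Tb c)) ∪
  (Finset.univ.image fun p : Fin ℓ × Fin ν => s(V p.1 p.2 0, V p.1 p.2 1)) ∪
  (Finset.univ.image fun p : Fin ℓ × Fin ν => s(V p.1 p.2 2, V p.1 p.2 3)) ∪
  (Finset.univ.image fun p : Fin ℓ × Fin ν => s(Vb p.1 p.2 0, Vb p.1 p.2 3)) ∪
  (Finset.univ.image fun p : Fin ℓ × Fin ν => s(Vb p.1 p.2 1, Vb p.1 p.2 2)) ∪
  (Finset.univ.image fun e : E => s(Ed e 0, Ed e 3)) ∪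
  (Finset.univ.image fun e : E => s(Ed e 1, Ed e 2))

/-!
In `M1` every agent except `a^c_{i,2}, a^c_{i,4}, ā^c_{i,1}, ā^c_{i,3}, a_{e,1}, a_{e,3}, u^c, ū^c`
is matched to the head of its preference list, and every agent on the list of one of these
exceptions is matched to the head of its own list. A blocking pair needs both of its agents to
prefer someone to their partner, which an agent matched to its first choice never does; so
`M1` is stable.
-/

section FirstChoice

variable {A : Type*} {P : PrefProfile A} {M : Finset (Sym2 A)}

def MatchedToFirstChoice (P : PrefProfile A) (M : Finset (Sym2 A)) (a : A) : Prop :=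
  ∃ p, s(a, p) ∈ M ∧ P.rank a p = 0

lemma Blocks.symm {a b : A} (h : Blocks P M a b) : Blocks P M b a :=
  ⟨h.2.1, h.1, h.2.2.2, h.2.2.1⟩

lemma MatchedToFirstChoice.not_blocks {a : A} (ha : MatchedToFirstChoice P M a) (b : A) :
    ¬ Blocks P M a b := by
  rintro ⟨-, -, hpref, -⟩
  obtain ⟨p, hp, hrank⟩ := ha
  have := hpref p hp
  rw [PrefProfile.Prefers, hrank] at this
  exact Nat.not_lt_zero _ this

theorem isStable_of_matchedToFirstChoice (hM : IsMatching M) (hacc : Acceptable P M)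
    (h : ∀ a b, b ∈ P.acc a → MatchedToFirstChoice P M a ∨ MatchedToFirstChoice P M b) :
    IsStable P M := by
  refine ⟨hM, hacc, fun a b hab => ?_⟩
  rcases h a b hab.1 with ha | hb
  · exact ha.not_blocks b hab
  · exact hb.not_blocks a hab.symm

end FirstChoice

namespace Ag

variable {ℓ ν : ℕ} {E : Type} [DecidableEq E]

-- The agents `U c`, `Ub c`, unmatched in `M1g`, are their own partners.
def partner : Ag ℓ ν E → Ag ℓ ν E
  | S c => T c
  | T c => S c
  | Sb c => Tb c
  | Tb c => Sb c
  | U c => U c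
  | Ub c => Ub c
  | V c i j => V c i (if j = 0 then 1 else if j = 1 then 0 else if j = 2 then 3 else 2)
  | Vb c i j => Vb c i (if j = 0 then 3 else if j = 1 then 2 else if j = 2 then 1 else 0)
  | Ed e j => Ed e (if j = 0 then 3 else if j = 1 then 2 else if j = 2 then 1 else 0)

def GetsFirstChoice : Ag ℓ ν E → Prop
  | S _ | Sb _ | T _ | Tb _ => True
  | U _ | Ub _ => False
  | V _ _ j => j = 0 ∨ j = 2
  | Vb _ _ j | Ed _ j => j = 1 ∨ j = 3

variable (c1 c2 : E → Fin ℓ) (i1 i2 : E → Fin ν) (enc : Fin ℓ → Fin ν → List E)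

lemma getsFirstChoice_or_of_mem_acc {a b : Ag ℓ ν E}
    (hb : b ∈ (profOfList (plist911 false c1 c2 i1 i2 enc)).acc a) :
    a.GetsFirstChoice ∨ b.GetsFirstChoice := by
  cases a with
  | S | Sb | T | Tb => simp [GetsFirstChoice]
  | U | Ub => aesop (add simp [profOfList, plist911, GetsFirstChoice])
  | V c i j | Vb c i j | Ed e j =>
    fin_cases j <;> aesop (add simp [profOfList, plist911, GetsFirstChoice])

variable [Fintype E]

lemma eq_partner_of_mem_M1g {a b : Ag ℓ ν E} (h : s(a, b) ∈ M1g) : b = partner a := by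
  simp only [M1g, Finset.mem_union, Finset.mem_image, Finset.mem_univ, true_and] at h
  rcases h with (((((((⟨c, hc⟩ | ⟨c, hc⟩) | ⟨p, hc⟩) | ⟨p, hc⟩) | ⟨p, hc⟩) | ⟨p, hc⟩) |
      ⟨e, hc⟩) | ⟨e, hc⟩) <;>
    rcases Sym2.eq_iff.1 hc with ⟨rfl, rfl⟩ | ⟨rfl, rfl⟩ <;> simp [partner]

lemma M1g_isMatching : IsMatching (M1g : Finset (Sym2 (Ag ℓ ν E))) := by
  refine ⟨?_, fun a b c hb hc => (eq_partner_of_mem_M1g hb).trans (eq_partner_of_mem_M1g hc).symm⟩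
  simp only [M1g, Finset.forall_mem_union, Finset.forall_mem_image, Finset.mem_univ,
    forall_const]
  simp [Sym2.mk_isDiag_iff]

lemma M1g_acceptable : Acceptable (profOfList (plist911 false c1 c2 i1 i2 enc)) M1g := by
  intro a b h
  simp only [M1g, Finset.mem_union, Finset.mem_image, Finset.mem_univ, true_and] at h
  rcases h with (((((((⟨c, hc⟩ | ⟨c, hc⟩) | ⟨p, hc⟩) | ⟨p, hc⟩) | ⟨p, hc⟩) | ⟨p, hc⟩) |
      ⟨e, hc⟩) | ⟨e, hc⟩) <;>
    rcases Sym2.eq_iff.1 hc with ⟨rfl, rfl⟩ | ⟨rfl, rfl⟩ <;> simp [profOfList, plist911]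

lemma matchedToFirstChoice_of_getsFirstChoice {a : Ag ℓ ν E} (ha : a.GetsFirstChoice) :
    MatchedToFirstChoice (profOfList (plist911 false c1 c2 i1 i2 enc)) M1g a := by
  refine ⟨partner a, ?_, ?_⟩ <;>
    cases a <;> simp only [GetsFirstChoice] at ha <;> (try rcases ha with rfl | rfl) <;>
    simp [partner, M1g, profOfList, plist911]

end Ag

theorem stmt9_general (c1 c2 : E → Fin ℓ) (i1 i2 : E → Fin ν)
    (enc : Fin ℓ → Fin ν → List E) :
    IsStable (profOfList (plist911 false c1 c2 i1 i2 enc)) (M1g (ℓ := ℓ) (ν := ν) (E := E)) := by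
  refine isStable_of_matchedToFirstChoice Ag.M1g_isMatching (Ag.M1g_acceptable c1 c2 i1 i2 enc)
    fun a b hab => ?_
  exact (Ag.getsFirstChoice_or_of_mem_acc c1 c2 i1 i2 enc hab).imp
    (Ag.matchedToFirstChoice_of_getsFirstChoice c1 c2 i1 i2 enc)
    (Ag.matchedToFirstChoice_of_getsFirstChoice c1 c2 i1 i2 enc)

/-- In the multicolored-clique construction, `M1` is stable with respect to `P1`. -/
theorem stmt9 (r : ℕ) (c1 c2 : E → Fin ℓ) (i1 i2 : E → Fin ν)
    (enc : Fin ℓ → Fin ν → List E)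
    (hpart : ∀ e : E, c1 e ≠ c2 e)
    (hsimple : ∀ e e' : E,
      ((c1 e = c1 e' ∧ i1 e = i1 e' ∧ c2 e = c2 e' ∧ i2 e = i2 e') ∨
       (c1 e = c2 e' ∧ i1 e = i2 e' ∧ c2 e = c1 e' ∧ i2 e = i1 e')) → e = e')
    (hnodup : ∀ c i, (enc c i).Nodup)
    (hmem : ∀ c i e, e ∈ enc c i ↔ Incident c1 c2 i1 i2 e c i)
    (hreg : ∀ c i, (enc c i).length = r) :
    IsStable (profOfList (plist911 false c1 c2 i1 i2 enc)) (M1g (ℓ := ℓ) (ν := ν) (E := E)) :=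
  stmt9_general c1 c2 i1 i2 enc
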